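/- Using x₁ = 2t, x₂ = t², x₃ = 4t³ − (3/2)ω, x₅ = 12t⁵ − (17/2)t²ω + (3/2)σω in ℚ[t,σ,ω], the element ω·P_sl = ω(2tσ − ω − 2t³) equals (4/3)t·x₅ + (16/9)t⁶ − (8/3)t³·x₃ − (4/9)x₃². -/
import Mathlib
set_option synthInstance.maxHeartbeats 1000000 in
set_option maxHeartbeats 1000000 in

open MvPolynomial in
theorem omega_Psl_via_x_elements :
    let t : MvPolynomial (Fin 3) ℚ := X 0
    let σ : MvPolynomial (Fin 3) ℚ := X 1
    let ω : MvPolynomial (Fin 3) ℚ := X 2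
    let x₃ : MvPolynomial (Fin 3) ℚ := 4 * t ^ 3 - (3 / 2 : ℚ) • ω
    let x₅ : MvPolynomial (Fin 3) ℚ :=
      12 * t ^ 5 - (17 / 2 : ℚ) • (t ^ 2 * ω) + (3 / 2 : ℚ) • (σ * ω)
    ω * (2 * t * σ - ω - 2 * t ^ 3) =
      (4 / 3 : ℚ) • (t * x₅) + (16 / 9 : ℚ) • (t ^ 6)
        - (8 / 3 : ℚ) • (t ^ 3 * x₃) - (4 / 9 : ℚ) • (x₃ ^ 2) := by
  intro t σ ω x₃ x₅
  apply smul_right_injective (MvPolynomial (Fin 3) ℚ) (by norm_num : (36 : ℚ) ≠ 0)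
  simp only [x₃, x₅, t, σ, ω, smul_add, smul_sub, smul_smul, mul_smul_comm, smul_mul_assoc, mul_sub, mul_add, sub_mul, add_mul, smul_pow, sq]
  norm_num
  simp only [smul_eq_C_mul, map_ofNat]
  ring
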